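/- Let A be a formula of ELPAω_lp with a placeholder $ occurring only positively, and let B, C be formulas. If ELPAω_lp proves ⊢ B^⊥, 1, then ELPAω_lp proves both (1) ⊢ (A[(B⊗C)/$])^⊥, A[C/$] and (2) ⊢ (A[C/$])^⊥, A[(B^⊥⅋C)/$]. If ELPAω_lp proves ⊢ B, then ELPAω_lp proves both (3) ⊢ (A[C/$])^⊥, A[(B⊗C)/$] and (4) ⊢ (A[(B^⊥⅋C)/$])^⊥, A[C/$]. -/

import Mathlib

/-!
Positive contexts are monotone: from `⊢ P^⊥, Q` one gets `⊢ (A[P/$])^⊥, A[Q/$]` by induction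
on `A`, since every connective and quantifier is monotone for linear implication. It therefore
suffices to treat `A = $`. If `⊢ B^⊥, 1`, then cutting against the `⊥`-rule weakens `B^⊥` into
any derivable sequent, so `B^⊥` may be added next to an axiom `⊢ C^⊥, C`; if `⊢ B`, then `B ⊗ C`
follows from `C` by the `⊗`-rule.
-/

namespace WR

/-- Finite types of `EPAω`: `o` is the type of natural numbers, `arr σ τ` is `σ → τ`. -/
inductive Ty : Type
  | o : Ty
  | arr : Ty → Ty → Ty
  deriving DecidableEq

notation "𝕆" => Ty.o
infixr:60 " ⤳ " => Ty.arr

/-- The type `1` of number sequences. -/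
abbrev Ty1 : Ty := 𝕆 ⤳ 𝕆
/-- The type of binary number functions. -/
abbrev Ty2 : Ty := 𝕆 ⤳ 𝕆 ⤳ 𝕆

/-- Hereditarily computable types: `comp 0 = 1`, `comp (ρ ⤳ τ) = comp ρ ⤳ comp τ`. -/
def Ty.comp : Ty → Ty
  | .o => Ty1
  | .arr ρ τ => .arr ρ.comp τ.comp

/-- Terms of `EPAω`: typed variables, zero, successor, projectors (K), combinators (S),
recursors (R), λ-abstraction and application. -/
inductive Tm : Ty → Type
  | var (n : ℕ) (τ : Ty) : Tm τ
  | zero : Tm 𝕆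
  | succ : Tm (𝕆 ⤳ 𝕆)
  | K (σ τ : Ty) : Tm (σ ⤳ τ ⤳ σ)
  | S (δ ρ τ : Ty) : Tm ((δ ⤳ ρ ⤳ τ) ⤳ (δ ⤳ ρ) ⤳ δ ⤳ τ)
  | R (τ : Ty) : Tm (τ ⤳ (𝕆 ⤳ τ ⤳ τ) ⤳ 𝕆 ⤳ τ)
  | lam {τ : Ty} (n : ℕ) (σ : Ty) : Tm τ → Tm (σ ⤳ τ)
  | app {σ τ : Ty} : Tm (σ ⤳ τ) → Tm σ → Tm τ

/-- Free variables of a term (as (index, type) pairs). -/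
def Tm.fvars : {τ : Ty} → Tm τ → Set (ℕ × Ty)
  | _, .var m ρ => {(m, ρ)}
  | _, .zero => ∅
  | _, .succ => ∅
  | _, .K _ _ => ∅
  | _, .S _ _ _ => ∅
  | _, .R _ => ∅
  | _, .lam m ρ t => Tm.fvars t \ {(m, ρ)}
  | _, .app f a => Tm.fvars f ∪ Tm.fvars a

/-- A term is closed if it has no free variables. -/
def Tm.Closed {τ : Ty} (t : Tm τ) : Prop := t.fvars = ∅

/-- A strict upper bound for all (free or bound) variable indices occurring in a term. -/
def Tm.maxVar : {τ : Ty} → Tm τ → ℕ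
  | _, .var m _ => m + 1
  | _, .zero => 0
  | _, .succ => 0
  | _, .K _ _ => 0
  | _, .S _ _ _ => 0
  | _, .R _ => 0
  | _, .lam m _ t => max (m + 1) (Tm.maxVar t)
  | _, .app f a => max (Tm.maxVar f) (Tm.maxVar a)

/-- Substitution of the term `s` for the variable `(n, σ)` in a term (naive). -/
def Tm.subst : {τ : Ty} → Tm τ → ℕ → {σ : Ty} → Tm σ → Tm τ
  | _, .var m ρ, n, σ, s =>
      if h : m = n ∧ ρ = σ then (by rw [h.2]; exact s) else .var m ρ
  | _, .zero, _, _, _ => .zero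
  | _, .succ, _, _, _ => .succ
  | _, .K σ' τ', _, _, _ => .K σ' τ'
  | _, .S δ ρ τ', _, _, _ => .S δ ρ τ'
  | _, .R τ', _, _, _ => .R τ'
  | _, .lam m ρ t, n, σ, s =>
      if m = n ∧ ρ = σ then .lam m ρ t else .lam m ρ (Tm.subst t n s)
  | _, .app f a, n, _, s => .app (Tm.subst f n s) (Tm.subst a n s)

/-- `s` is free for the variable `(n, σ)` in the term `t`:
no free occurrence of the variable lies in the scope of a binder capturing a
free variable of `s`. -/
def Tm.FreeForIn {σ : Ty} (s : Tm σ) (n : ℕ) : {τ : Ty} → Tm τ → Prop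
  | _, .lam m ρ t =>
      ((n, σ) ∉ Tm.fvars t) ∨ (m = n ∧ ρ = σ) ∨
        (((m, ρ) ∉ s.fvars) ∧ Tm.FreeForIn s n t)
  | _, .app f a => Tm.FreeForIn s n f ∧ Tm.FreeForIn s n a
  | _, _ => True

/-- Variable of type `0`. -/
abbrev v0 (n : ℕ) : Tm 𝕆 := .var n 𝕆
/-- The numeral `1`. -/
def tm1 : Tm 𝕆 := Tm.app Tm.succ Tm.zero

/-- Recursion at type `0`. -/
def recO (y : Tm 𝕆) (z : Tm (𝕆 ⤳ 𝕆 ⤳ 𝕆)) (n : Tm 𝕆) : Tm 𝕆 :=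
  (((Tm.R 𝕆).app y).app z).app n

/-- Addition: `addT a b = a + b`. -/
def addT : Tm Ty2 :=
  .lam 0 𝕆 (.lam 1 𝕆 (recO (v0 0) (.lam 2 𝕆 (.lam 3 𝕆 (Tm.succ.app (v0 3)))) (v0 1)))

/-- Predecessor (with `pred 0 = 0`). -/
def predT : Tm Ty1 :=
  .lam 0 𝕆 (recO .zero (.lam 1 𝕆 (.lam 2 𝕆 (v0 1))) (v0 0))

/-- `condT c a b` equals `a` if `c = 0` and `b` otherwise. -/
def condT : Tm (𝕆 ⤳ 𝕆 ⤳ 𝕆 ⤳ 𝕆) :=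
  .lam 0 𝕆 (.lam 1 𝕆 (.lam 2 𝕆 (recO (v0 1) (.lam 3 𝕆 (.lam 4 𝕆 (v0 2))) (v0 0))))

/-- Cut-off subtraction `a ∸ b`. -/
def monusT : Tm Ty2 :=
  .lam 0 𝕆 (.lam 1 𝕆 (recO (v0 0) (.lam 2 𝕆 (.lam 3 𝕆 (predT.app (v0 3)))) (v0 1)))

/-- Triangular numbers `tri n = 0 + 1 + ⋯ + n`. -/
def triT : Tm Ty1 :=
  .lam 0 𝕆 (recO .zero
    (.lam 1 𝕆 (.lam 2 𝕆 ((addT.app (v0 2)).app (Tm.succ.app (v0 1))))) (v0 0))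

/-- Cantor pairing `j x y = tri (x + y) + y` (injective). -/
def pairT : Tm Ty2 :=
  .lam 0 𝕆 (.lam 1 𝕆
    ((addT.app (triT.app ((addT.app (v0 0)).app (v0 1)))).app (v0 1)))

/-- Signum: `sg 0 = 0`, `sg (n+1) = 1`. -/
def sgT : Tm Ty1 :=
  .lam 0 𝕆 (recO .zero (.lam 1 𝕆 (.lam 2 𝕆 tm1)) (v0 0))

/-- Pointwise pairing of two sequences: `pwPairT u y = λk. j (u k) (y k)`. -/
def pwPairT : Tm (Ty1 ⤳ Ty1 ⤳ Ty1) :=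
  .lam 0 Ty1 (.lam 1 Ty1 (.lam 2 𝕆
    ((pairT.app ((Tm.var 0 Ty1).app (v0 2))).app ((Tm.var 1 Ty1).app (v0 2)))))

/-- `seqCodeT z u v` is the code of the finite sequence `⟨u⟩ * z̄v = (u, z 0, …, z (v-1))`
(coded by iterated injective pairing). -/
def seqCodeT : Tm (Ty1 ⤳ 𝕆 ⤳ 𝕆 ⤳ 𝕆) :=
  .lam 0 Ty1 (.lam 1 𝕆 (.lam 2 𝕆
    (recO (Tm.succ.app ((pairT.app (v0 1)).app .zero))
      (.lam 3 𝕆 (.lam 4 𝕆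
        (Tm.succ.app ((pairT.app ((Tm.var 0 Ty1).app (v0 3))).app (v0 4)))))
      (v0 2))))

/-- `initCodeT z v` is the code of the finite sequence `z̄v = (z 0, …, z (v-1))`. -/
def initCodeT : Tm (Ty1 ⤳ 𝕆 ⤳ 𝕆) :=
  .lam 0 Ty1 (.lam 1 𝕆
    (recO .zero
      (.lam 2 𝕆 (.lam 3 𝕆
        (Tm.succ.app ((pairT.app ((Tm.var 0 Ty1).app (v0 2))).app (v0 3)))))
      (v0 1)))

/-- Formulas of (classical) `EPAω`. The only atomic predicate is equality at type `0`.-/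
inductive CForm : Type
  | eq : Tm 𝕆 → Tm 𝕆 → CForm
  | not : CForm → CForm
  | and : CForm → CForm → CForm
  | or : CForm → CForm → CForm
  | imp : CForm → CForm → CForm
  | all : ℕ → Ty → CForm → CForm
  | ex : ℕ → Ty → CForm → CForm

/-- Free variables of a classical formula. -/
def CForm.fvars : CForm → Set (ℕ × Ty)
  | .eq s t => s.fvars ∪ t.fvars
  | .not A => A.fvars
  | .and A B => A.fvars ∪ B.fvars
  | .or A B => A.fvars ∪ B.fvars
  | .imp A B => A.fvars ∪ B.fvars
  | .all n τ A => A.fvars \ {(n, τ)}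
  | .ex n τ A => A.fvars \ {(n, τ)}

/-- Substitution of a term for a variable in a classical formula (naive). -/
def CForm.substTm (A : CForm) (n : ℕ) {σ : Ty} (s : Tm σ) : CForm :=
  match A with
  | .eq a b => .eq (a.subst n s) (b.subst n s)
  | .not A => .not (A.substTm n s)
  | .and A B => .and (A.substTm n s) (B.substTm n s)
  | .or A B => .or (A.substTm n s) (B.substTm n s)
  | .imp A B => .imp (A.substTm n s) (B.substTm n s)
  | .all m τ A => if m = n ∧ τ = σ then .all m τ A else .all m τ (A.substTm n s)
  | .ex m τ A => if m = n ∧ τ = σ then .ex m τ A else .ex m τ (A.substTm n s)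

/-- `s` is free for the variable `(n, σ)` in the classical formula `A`. -/
def CForm.FreeFor {σ : Ty} (s : Tm σ) (n : ℕ) : CForm → Prop
  | .eq _ _ => True
  | .not A => CForm.FreeFor s n A
  | .and A B => CForm.FreeFor s n A ∧ CForm.FreeFor s n B
  | .or A B => CForm.FreeFor s n A ∧ CForm.FreeFor s n B
  | .imp A B => CForm.FreeFor s n A ∧ CForm.FreeFor s n B
  | .all m τ A =>
      ((n, σ) ∉ (A.fvars \ {(m, τ)})) ∨ (((m, τ) ∉ s.fvars) ∧ CForm.FreeFor s n A)
  | .ex m τ A =>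
      ((n, σ) ∉ (A.fvars \ {(m, τ)})) ∨ (((m, τ) ∉ s.fvars) ∧ CForm.FreeFor s n A)

/-- Quantifier-free classical formulas. -/
def CForm.qf : CForm → Prop
  | .eq _ _ => True
  | .not A => A.qf
  | .and A B => A.qf ∧ B.qf
  | .or A B => A.qf ∧ B.qf
  | .imp A B => A.qf ∧ B.qf
  | .all _ _ _ => False
  | .ex _ _ _ => False

/-- Higher-type equality as an abbreviation: `s =_{ρ ⤳ τ} t :≡ ∀x (s x =_τ t x)`. -/
def eqAt : (τ : Ty) → Tm τ → Tm τ → CForm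
  | 𝕆, s, t => .eq s t
  | .arr σ τ, s, t =>
      let n := max s.maxVar t.maxVar
      .all n σ (eqAt τ (s.app (.var n σ)) (t.app (.var n σ)))

/-- `s ≠₀ t`. -/
def neqF (s t : Tm 𝕆) : CForm := .not (.eq s t)
/-- Classical bi-implication. -/
def iffC (A B : CForm) : CForm := (A.imp B).and (B.imp A)

/-- `s <₀ t` expressed as `∃k (s + (k+1) = t)`. -/
def ltF (s t : Tm 𝕆) : CForm :=
  let k := max s.maxVar t.maxVar
  .ex k 𝕆 (.eq ((addT.app s).app (Tm.app Tm.succ (v0 k))) t)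

/-- `s ≤₀ t` expressed as `∃k (s + k = t)`. -/
def leF (s t : Tm 𝕆) : CForm :=
  let k := max s.maxVar t.maxVar
  .ex k 𝕆 (.eq ((addT.app s).app (v0 k)) t)

/-- The axioms of `EPAω`: equality axioms, successor axioms, defining equations for the
projectors, combinators, recursors and λ-abstraction, extensionality and full induction. -/
inductive EPAAx : CForm → Prop
  | eqRefl (n : ℕ) : EPAAx (.eq (v0 n) (v0 n))
  | eqSym (n m : ℕ) :
      EPAAx ((CForm.eq (v0 n) (v0 m)).imp (.eq (v0 m) (v0 n)))
  | eqTrans (n m k : ℕ) :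
      EPAAx (((CForm.eq (v0 n) (v0 m)).and (.eq (v0 m) (v0 k))).imp (.eq (v0 n) (v0 k)))
  | eqSub (A : CForm) (z x y : ℕ)
      (hx : CForm.FreeFor (v0 x) z A) (hy : CForm.FreeFor (v0 y) z A) :
      EPAAx ((CForm.eq (v0 x) (v0 y)).imp
        ((A.substTm z (v0 x)).imp (A.substTm z (v0 y))))
  | succInj (n m : ℕ) :
      EPAAx ((CForm.eq (Tm.app Tm.succ (v0 n)) (Tm.app Tm.succ (v0 m))).imp
        (.eq (v0 n) (v0 m)))
  | succNeZero (n : ℕ) : EPAAx (.not (.eq (Tm.app Tm.succ (v0 n)) .zero))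
  | axK {σ τ : Ty} (a : Tm σ) (b : Tm τ) :
      EPAAx (eqAt σ (((Tm.K σ τ).app a).app b) a)
  | axS {δ ρ τ : Ty} (x : Tm (δ ⤳ ρ ⤳ τ)) (y : Tm (δ ⤳ ρ)) (z : Tm δ) :
      EPAAx (eqAt τ ((((Tm.S δ ρ τ).app x).app y).app z) ((x.app z).app (y.app z)))
  | axR0 {τ : Ty} (y : Tm τ) (z : Tm (𝕆 ⤳ τ ⤳ τ)) :
      EPAAx (eqAt τ ((((Tm.R τ).app y).app z).app .zero) y)
  | axRS {τ : Ty} (y : Tm τ) (z : Tm (𝕆 ⤳ τ ⤳ τ)) (n : Tm 𝕆) :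
      EPAAx (eqAt τ ((((Tm.R τ).app y).app z).app (Tm.app Tm.succ n))
        ((z.app n).app ((((Tm.R τ).app y).app z).app n)))
  | axBeta {σ τ : Ty} (n : ℕ) (t : Tm τ) (s : Tm σ) (h : s.FreeForIn n t) :
      EPAAx (eqAt τ ((Tm.lam n σ t).app s) (t.subst n s))
  | axExt {ρ τ : Ty} (nz nx ny : ℕ) :
      EPAAx ((eqAt ρ (.var nx ρ) (.var ny ρ)).imp
        (eqAt τ ((Tm.var nz (ρ ⤳ τ)).app (.var nx ρ)) ((Tm.var nz (ρ ⤳ τ)).app (.var ny ρ))))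
  | axInd (A : CForm) (n : ℕ)
      (h : CForm.FreeFor (Tm.app Tm.succ (v0 n)) n A) :
      EPAAx (((A.substTm n (Tm.zero)).and
        (.all n 𝕆 (A.imp (A.substTm n (Tm.app Tm.succ (v0 n)))))).imp (.all n 𝕆 A))

/-- `EPAω`'s axioms as a set of formulas. -/
def EPA : Set CForm := fun A => EPAAx A

/-- The quantifier-free axiom of choice `QF-AC⁰⁰`. -/
inductive QFAC : CForm → Prop
  | mk (A : CForm) (x y Y : ℕ) (hqf : A.qf) (hxy : x ≠ y)
      (hY : (Y, Ty1) ∉ A.fvars)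
      (hff : CForm.FreeFor ((Tm.var Y Ty1).app (v0 x)) y A) :
      QFAC ((CForm.all x 𝕆 (.ex y 𝕆 A)).imp
        (.ex Y Ty1 (.all x 𝕆 (A.substTm y ((Tm.var Y Ty1).app (v0 x))))))

/-- `QF-AC⁰⁰` as a set of formulas. -/
def QFA : Set CForm := fun A => QFAC A

/-- Gentzen-style two-sided sequent calculus for classical logic over `Tm`,
with axioms from the set `Ax`. `CProof Ax Γ Δ` means `Γ ⊢ Δ` is derivable. -/
inductive CProof (Ax : Set CForm) : List CForm → List CForm → Prop
  | ax {A} (h : A ∈ Ax) : CProof Ax [] [A]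
  | id (A) : CProof Ax [A] [A]
  | cut {Γ Δ Γ' Δ' A} :
      CProof Ax Γ (A :: Δ) → CProof Ax (A :: Γ') Δ' → CProof Ax (Γ ++ Γ') (Δ ++ Δ')
  | permL {Γ Γ' Δ} : CProof Ax Γ Δ → Γ.Perm Γ' → CProof Ax Γ' Δ
  | permR {Γ Δ Δ'} : CProof Ax Γ Δ → Δ.Perm Δ' → CProof Ax Γ Δ'
  | wkL {Γ Δ} (A) : CProof Ax Γ Δ → CProof Ax (A :: Γ) Δ
  | wkR {Γ Δ} (A) : CProof Ax Γ Δ → CProof Ax Γ (A :: Δ)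
  | conL {Γ Δ A} : CProof Ax (A :: A :: Γ) Δ → CProof Ax (A :: Γ) Δ
  | conR {Γ Δ A} : CProof Ax Γ (A :: A :: Δ) → CProof Ax Γ (A :: Δ)
  | notL {Γ Δ A} : CProof Ax Γ (A :: Δ) → CProof Ax (CForm.not A :: Γ) Δ
  | notR {Γ Δ A} : CProof Ax (A :: Γ) Δ → CProof Ax Γ (CForm.not A :: Δ)
  | andL {Γ Δ A B} : CProof Ax (A :: B :: Γ) Δ → CProof Ax ((CForm.and A B) :: Γ) Δ
  | andR {Γ Δ A B} :
      CProof Ax Γ (A :: Δ) → CProof Ax Γ (B :: Δ) → CProof Ax Γ ((CForm.and A B) :: Δ)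
  | orL {Γ Δ A B} :
      CProof Ax (A :: Γ) Δ → CProof Ax (B :: Γ) Δ → CProof Ax ((CForm.or A B) :: Γ) Δ
  | orR {Γ Δ A B} : CProof Ax Γ (A :: B :: Δ) → CProof Ax Γ ((CForm.or A B) :: Δ)
  | impL {Γ Δ A B} :
      CProof Ax Γ (A :: Δ) → CProof Ax (B :: Γ) Δ → CProof Ax ((CForm.imp A B) :: Γ) Δ
  | impR {Γ Δ A B} : CProof Ax (A :: Γ) (B :: Δ) → CProof Ax Γ ((CForm.imp A B) :: Δ)
  | allL {Γ Δ A n σ} (t : Tm σ) (hff : CForm.FreeFor t n A) :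
      CProof Ax ((A.substTm n t) :: Γ) Δ → CProof Ax ((CForm.all n σ A) :: Γ) Δ
  | allR {Γ Δ A n σ}
      (hfr : ∀ B ∈ Γ, (n, σ) ∉ CForm.fvars B) (hfr' : ∀ B ∈ Δ, (n, σ) ∉ CForm.fvars B) :
      CProof Ax Γ (A :: Δ) → CProof Ax Γ ((CForm.all n σ A) :: Δ)
  | exL {Γ Δ A n σ}
      (hfr : ∀ B ∈ Γ, (n, σ) ∉ CForm.fvars B) (hfr' : ∀ B ∈ Δ, (n, σ) ∉ CForm.fvars B) :
      CProof Ax (A :: Γ) Δ → CProof Ax ((CForm.ex n σ A) :: Γ) Δ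
  | exR {Γ Δ A n σ} (t : Tm σ) (hff : CForm.FreeFor t n A) :
      CProof Ax Γ ((A.substTm n t) :: Δ) → CProof Ax Γ ((CForm.ex n σ A) :: Δ)

/-- Formulas of the linear calculi `ELPAω_lp` / `ELPAω_eq` (in negation normal form,
with dual pairs of atoms). `ph`/`nph` is a placeholder (and its dual). -/
inductive LForm : Type
  | one : LForm
  | zer : LForm
  | top : LForm
  | bot : LForm
  | eq : Tm 𝕆 → Tm 𝕆 → LForm
  | neq : Tm 𝕆 → Tm 𝕆 → LForm
  | lp : (τ : Ty) → Tm τ → LForm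
  | nlp : (τ : Ty) → Tm τ → LForm
  | deq : Tm 𝕆 → Tm 𝕆 → LForm
  | ndeq : Tm 𝕆 → Tm 𝕆 → LForm
  | tag : Tm 𝕆 → LForm
  | ntag : Tm 𝕆 → LForm
  | ph : LForm
  | nph : LForm
  | tensor : LForm → LForm → LForm
  | par : LForm → LForm → LForm
  | oplus : LForm → LForm → LForm
  | withC : LForm → LForm → LForm
  | bang : LForm → LForm
  | quest : LForm → LForm
  | all : ℕ → Ty → LForm → LForm
  | ex : ℕ → Ty → LForm → LForm

/-- Linear negation `A^⊥` (an involution, by De Morgan duality). -/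
def LForm.neg : LForm → LForm
  | .one => .bot
  | .bot => .one
  | .zer => .top
  | .top => .zer
  | .eq s t => .neq s t
  | .neq s t => .eq s t
  | .lp τ t => .nlp τ t
  | .nlp τ t => .lp τ t
  | .deq s t => .ndeq s t
  | .ndeq s t => .deq s t
  | .tag t => .ntag t
  | .ntag t => .tag t
  | .ph => .nph
  | .nph => .ph
  | .tensor A B => .par A.neg B.neg
  | .par A B => .tensor A.neg B.neg
  | .oplus A B => .withC A.neg B.neg
  | .withC A B => .oplus A.neg B.neg
  | .bang A => .quest A.neg
  | .quest A => .bang A.neg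
  | .all n τ A => .ex n τ A.neg
  | .ex n τ A => .all n τ A.neg

/-- Linear implication `A ⊸ B :≡ A^⊥ ⅋ B`. -/
def LForm.limp (A B : LForm) : LForm := .par A.neg B

/-- Free variables of a linear formula. -/
def LForm.fvars : LForm → Set (ℕ × Ty)
  | .eq s t => s.fvars ∪ t.fvars
  | .neq s t => s.fvars ∪ t.fvars
  | .deq s t => s.fvars ∪ t.fvars
  | .ndeq s t => s.fvars ∪ t.fvars
  | .lp _ t => t.fvars
  | .nlp _ t => t.fvars
  | .tag t => t.fvars
  | .ntag t => t.fvars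
  | .tensor A B => A.fvars ∪ B.fvars
  | .par A B => A.fvars ∪ B.fvars
  | .oplus A B => A.fvars ∪ B.fvars
  | .withC A B => A.fvars ∪ B.fvars
  | .bang A => A.fvars
  | .quest A => A.fvars
  | .all n τ A => A.fvars \ {(n, τ)}
  | .ex n τ A => A.fvars \ {(n, τ)}
  | _ => ∅

/-- A strict upper bound for all variable indices occurring in a linear formula. -/
def LForm.maxVar : LForm → ℕ
  | .eq s t => max s.maxVar t.maxVar
  | .neq s t => max s.maxVar t.maxVar
  | .deq s t => max s.maxVar t.maxVar
  | .ndeq s t => max s.maxVar t.maxVar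
  | .lp _ t => t.maxVar
  | .nlp _ t => t.maxVar
  | .tag t => t.maxVar
  | .ntag t => t.maxVar
  | .tensor A B => max A.maxVar B.maxVar
  | .par A B => max A.maxVar B.maxVar
  | .oplus A B => max A.maxVar B.maxVar
  | .withC A B => max A.maxVar B.maxVar
  | .bang A => A.maxVar
  | .quest A => A.maxVar
  | .all n _ A => max (n + 1) A.maxVar
  | .ex n _ A => max (n + 1) A.maxVar
  | _ => 0

/-- Substitution of a term for a variable in a linear formula (naive). -/
def LForm.substTm (A : LForm) (n : ℕ) {σ : Ty} (s : Tm σ) : LForm :=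
  match A with
  | .eq a b => .eq (a.subst n s) (b.subst n s)
  | .neq a b => .neq (a.subst n s) (b.subst n s)
  | .deq a b => .deq (a.subst n s) (b.subst n s)
  | .ndeq a b => .ndeq (a.subst n s) (b.subst n s)
  | .lp τ t => .lp τ (t.subst n s)
  | .nlp τ t => .nlp τ (t.subst n s)
  | .tag t => .tag (t.subst n s)
  | .ntag t => .ntag (t.subst n s)
  | .tensor A B => .tensor (A.substTm n s) (B.substTm n s)
  | .par A B => .par (A.substTm n s) (B.substTm n s)
  | .oplus A B => .oplus (A.substTm n s) (B.substTm n s)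
  | .withC A B => .withC (A.substTm n s) (B.substTm n s)
  | .bang A => .bang (A.substTm n s)
  | .quest A => .quest (A.substTm n s)
  | .all m τ A => if m = n ∧ τ = σ then .all m τ A else .all m τ (A.substTm n s)
  | .ex m τ A => if m = n ∧ τ = σ then .ex m τ A else .ex m τ (A.substTm n s)
  | B => B

/-- `s` is free for the variable `(n, σ)` in the linear formula `A`. -/
def LForm.FreeFor {σ : Ty} (s : Tm σ) (n : ℕ) : LForm → Prop
  | .tensor A B => LForm.FreeFor s n A ∧ LForm.FreeFor s n B
  | .par A B => LForm.FreeFor s n A ∧ LForm.FreeFor s n B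
  | .oplus A B => LForm.FreeFor s n A ∧ LForm.FreeFor s n B
  | .withC A B => LForm.FreeFor s n A ∧ LForm.FreeFor s n B
  | .bang A => LForm.FreeFor s n A
  | .quest A => LForm.FreeFor s n A
  | .all m τ A =>
      ((n, σ) ∉ (A.fvars \ {(m, τ)})) ∨ (((m, τ) ∉ s.fvars) ∧ LForm.FreeFor s n A)
  | .ex m τ A =>
      ((n, σ) ∉ (A.fvars \ {(m, τ)})) ∨ (((m, τ) ∉ s.fvars) ∧ LForm.FreeFor s n A)
  | _ => True

/-- Nonlinear formulas: those containing no `⊕`, `&` and no linear predicate. -/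
def LForm.Nonlinear : LForm → Prop
  | .oplus _ _ => False
  | .withC _ _ => False
  | .lp _ _ => False
  | .nlp _ _ => False
  | .tensor A B => A.Nonlinear ∧ B.Nonlinear
  | .par A B => A.Nonlinear ∧ B.Nonlinear
  | .bang A => A.Nonlinear
  | .quest A => A.Nonlinear
  | .all _ _ A => A.Nonlinear
  | .ex _ _ A => A.Nonlinear
  | _ => True

/-- Formulas containing neither dot-equality nor the tagging predicate. -/
def LForm.NoDotTag : LForm → Prop
  | .deq _ _ => False
  | .ndeq _ _ => False
  | .tag _ => False
  | .ntag _ => False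
  | .tensor A B => A.NoDotTag ∧ B.NoDotTag
  | .par A B => A.NoDotTag ∧ B.NoDotTag
  | .oplus A B => A.NoDotTag ∧ B.NoDotTag
  | .withC A B => A.NoDotTag ∧ B.NoDotTag
  | .bang A => A.NoDotTag
  | .quest A => A.NoDotTag
  | .all _ _ A => A.NoDotTag
  | .ex _ _ A => A.NoDotTag
  | _ => True

/-- The Girard embedding `A ↦ A^L` of classical formulas into linear logic:
`∧ ↦ ⊗`, `∨ ↦ ⅋`, `¬ ↦ (·)^⊥`, `→ ↦ ⊸`. -/
def CForm.emb : CForm → LForm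
  | .eq s t => .eq s t
  | .not A => A.emb.neg
  | .and A B => .tensor A.emb B.emb
  | .or A B => .par A.emb B.emb
  | .imp A B => .par A.emb.neg B.emb
  | .all n τ A => .all n τ A.emb
  | .ex n τ A => .ex n τ A.emb

/-- Higher-type linear equality: `s =_{ρ ⤳ τ} t :≡ ∀x (s x =_τ t x)`. -/
def leqAt : (τ : Ty) → Tm τ → Tm τ → LForm
  | 𝕆, s, t => .eq s t
  | .arr σ τ, s, t =>
      let n := max s.maxVar t.maxVar
      .all n σ (leqAt τ (s.app (.var n σ)) (t.app (.var n σ)))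

/-- Higher-type dot-equality: `s ≐_{ρ ⤳ τ} t :≡ ∀x (s x ≐_τ t x)`. -/
def deqAt : (τ : Ty) → Tm τ → Tm τ → LForm
  | 𝕆, s, t => .deq s t
  | .arr σ τ, s, t =>
      let n := max s.maxVar t.maxVar
      .all n σ (deqAt τ (s.app (.var n σ)) (t.app (.var n σ)))

/-- Left part of the linear axiom of choice `(lAC)`:
`(∀x⁰ ∃y⁰ α x y =₀ 0)^⊥`. -/
def lACleft (a x y : ℕ) : LForm :=
  (LForm.all x 𝕆 (.ex y 𝕆
    (.eq (((Tm.var a Ty2).app (v0 x)).app (v0 y)) .zero))).neg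

/-- Right part of the linear axiom of choice `(lAC)`:
`∃Y¹ (∀x⁰ (α x (Y x) =₀ 0) ⊗ !(lp(α) ⊸ lp(Y)))`. -/
def lACright (a Y x : ℕ) : LForm :=
  .ex Y Ty1 ((LForm.all x 𝕆
      (.eq (((Tm.var a Ty2).app (v0 x)).app ((Tm.var Y Ty1).app (v0 x))) .zero)).tensor
    (.bang ((LForm.lp Ty2 (.var a Ty2)).limp (.lp Ty1 (.var Y Ty1)))))

/-- One-sided sequent calculus for the linear systems. `LProof affine eqc Ax Γ` means
that the sequent `⊢ Γ` is derivable, where: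
* `affine = true` adds unrestricted weakening `(w)` (the affine calculi `EAPAω`),
* `eqc = true` adds the dot-equality/tagging rules of the `_eq` calculi and restricts
  `(!₂)` to nonlinear formulas without `≐`/`□`,
* `Ax` is a set of classical formulas whose Girard embeddings are available as axioms
  (the embedded `EPAω` axioms plus possibly further formulas `Γ^L`). -/
inductive LProof (affine eqc : Bool) (Ax : Set CForm) : List LForm → Prop
  | fromAx {A} (h : A ∈ Ax) : LProof affine eqc Ax [A.emb]
  | id (A : LForm) : LProof affine eqc Ax [A, A.neg]
  | cut {Γ Δ A} :
      LProof affine eqc Ax (A :: Γ) → LProof affine eqc Ax (A.neg :: Δ) →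
      LProof affine eqc Ax (Γ ++ Δ)
  | perm {Γ Γ'} : LProof affine eqc Ax Γ → Γ.Perm Γ' → LProof affine eqc Ax Γ'
  | tensor {Γ Δ A B} :
      LProof affine eqc Ax (A :: Γ) → LProof affine eqc Ax (B :: Δ) →
      LProof affine eqc Ax ((LForm.tensor A B) :: Γ ++ Δ)
  | par {Γ A B} :
      LProof affine eqc Ax (A :: B :: Γ) → LProof affine eqc Ax ((LForm.par A B) :: Γ)
  | one : LProof affine eqc Ax [.one]
  | botR {Γ} : LProof affine eqc Ax Γ → LProof affine eqc Ax (.bot :: Γ)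
  | withR {Γ A B} :
      LProof affine eqc Ax (A :: Γ) → LProof affine eqc Ax (B :: Γ) →
      LProof affine eqc Ax ((LForm.withC A B) :: Γ)
  | top {Γ} : LProof affine eqc Ax (.top :: Γ)
  | oplus1 {Γ A B} : LProof affine eqc Ax (A :: Γ) →
      LProof affine eqc Ax ((LForm.oplus A B) :: Γ)
  | oplus2 {Γ A B} : LProof affine eqc Ax (B :: Γ) →
      LProof affine eqc Ax ((LForm.oplus A B) :: Γ)
  | bangR {Γ A} (h : ∀ B ∈ Γ, ∃ C, B = LForm.quest C) :
      LProof affine eqc Ax (A :: Γ) → LProof affine eqc Ax ((LForm.bang A) :: Γ)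
  | der {Γ A} : LProof affine eqc Ax (A :: Γ) →
      LProof affine eqc Ax ((LForm.quest A) :: Γ)
  | wkq {Γ} (A) : LProof affine eqc Ax Γ → LProof affine eqc Ax ((LForm.quest A) :: Γ)
  | conq {Γ A} :
      LProof affine eqc Ax (LForm.quest A :: LForm.quest A :: Γ) →
      LProof affine eqc Ax (LForm.quest A :: Γ)
  | allR {Γ A n σ} (h : ∀ B ∈ Γ, (n, σ) ∉ LForm.fvars B) :
      LProof affine eqc Ax (A :: Γ) → LProof affine eqc Ax ((LForm.all n σ A) :: Γ)
  | exR {Γ A n σ} (t : Tm σ) (hff : LForm.FreeFor t n A) :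
      LProof affine eqc Ax ((A.substTm n t) :: Γ) →
      LProof affine eqc Ax ((LForm.ex n σ A) :: Γ)
  -- axioms and rules for the linear predicate
  | lpAx {τ} (t : Tm τ) (h : t.Closed) : LProof affine eqc Ax [.lp τ t]
  | bang2 {A} (h : A.Nonlinear) (h2 : eqc = true → A.NoDotTag) :
      LProof affine eqc Ax [A.neg, .bang A]
  | lpCon {Γ τ t} :
      LProof affine eqc Ax (LForm.nlp τ t :: LForm.nlp τ t :: Γ) →
      LProof affine eqc Ax (LForm.nlp τ t :: Γ)
  | lpApp {ρ τ} (t : Tm (ρ ⤳ τ)) (r : Tm ρ) :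
      LProof affine eqc Ax [.nlp (ρ ⤳ τ) t, .nlp ρ r, .lp τ (t.app r)]
  | lAC (a Y x y : ℕ) (hxy : x ≠ y) :
      LProof affine eqc Ax [lACleft a x y, lACright a Y x]
  -- unrestricted weakening for the affine calculi
  | wk {Γ} (A) (h : affine = true) : LProof affine eqc Ax Γ →
      LProof affine eqc Ax (A :: Γ)
  -- rules of the `_eq` calculi
  | dotSucc (n : ℕ) (h : eqc = true) :
      LProof affine eqc Ax [.bang (.ndeq (Tm.app Tm.succ (v0 n)) .zero)]
  | dotEq1 {τ} {s t : Tm τ} (h : eqc = true) :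
      LProof affine eqc Ax [leqAt τ s t] → LProof affine eqc Ax [.bang (deqAt τ s t)]
  | dotEq2 (k : ℕ) (h : eqc = true) :
      LProof affine eqc Ax
        [(LForm.bang (.ndeq (v0 k) .zero)).neg, .bang (.deq (sgT.app (v0 k)) tm1)]
  | dotSub {τ} (x y z : ℕ) (A : LForm) (h : eqc = true)
      (hfx : LForm.FreeFor (Tm.var x τ) z A) (hfy : LForm.FreeFor (Tm.var y τ) z A) :
      LProof affine eqc Ax [(LForm.bang (deqAt τ (.var x τ) (.var y τ))).neg,
        (A.substTm z (Tm.var x τ)).neg, A.substTm z (Tm.var y τ)]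
  | tag0 (h : eqc = true) : LProof affine eqc Ax [.tag (sgT.app .zero)]
  | tagCon {Γ t} (h : eqc = true) :
      LProof affine eqc Ax (LForm.ntag t :: LForm.ntag t :: Γ) →
      LProof affine eqc Ax (LForm.ntag t :: Γ)
  | tagApp (x y : ℕ) (h : eqc = true) :
      LProof affine eqc Ax [.ntag (sgT.app (v0 x)), .ntag (sgT.app (v0 y)),
        .tag (sgT.app ((addT.app (v0 x)).app (v0 y)))]

/-- The linear universal quantifier `∀^lp x A :≡ ∀x (lp(x) ⊸ A)`. -/
def allLp (n : ℕ) (τ : Ty) (A : LForm) : LForm :=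
  .all n τ ((LForm.lp τ (.var n τ)).limp A)

/-- The linear existential quantifier `∃^lp x A :≡ ∃x (lp(x) ⊗ A)`. -/
def exLp (n : ℕ) (τ : Ty) (A : LForm) : LForm :=
  .ex n τ ((LForm.lp τ (.var n τ)).tensor A)

/-- The ε-guarded linear existential quantifier `∃^lp_ε x A :≡ ∃x (lp(x) ⊗ ε =₀ 0 ⊗ A)`. -/
def exLpE (e n : ℕ) (τ : Ty) (A : LForm) : LForm :=
  .ex n τ ((LForm.lp τ (.var n τ)).tensor ((LForm.eq (v0 e) .zero).tensor A))

/-- `halts(t·z) :≡ ∀u⁰ ∃v⁰ (t(⟨u⟩ * z̄v) ≠₀ 0)`. -/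
def haltsF (t z : Tm Ty1) : CForm :=
  let u := max t.maxVar z.maxVar
  let v := u + 1
  .all u 𝕆 (.ex v 𝕆
    (neqF (t.app (((seqCodeT.app z).app (v0 u)).app (v0 v))) .zero))

/-- `wit(t·z, x) :≡ ∀u⁰ ∃v⁰ (t(⟨u⟩ * z̄v) =₀ x(u)+1 ∧ ∀w <₀ v (t(⟨u⟩ * z̄w) =₀ 0))`. -/
def witF (t z x : Tm Ty1) : CForm :=
  let u := max (max t.maxVar z.maxVar) x.maxVar
  let v := u + 1
  let w := u + 2
  .all u 𝕆 (.ex v 𝕆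
    ((CForm.eq (t.app (((seqCodeT.app z).app (v0 u)).app (v0 v)))
        (Tm.app Tm.succ (x.app (v0 u)))).and
     (.all w 𝕆 ((ltF (v0 w) (v0 v)).imp
        (.eq (t.app (((seqCodeT.app z).app (v0 u)).app (v0 w))) .zero)))))

/-- `con_τ(s, t)`: the term `s` of type `comp τ` constructs the term `t` of type `τ`. -/
def conF : (τ : Ty) → Tm τ.comp → Tm τ → CForm
  | 𝕆, s, t =>
      let x := max s.maxVar t.maxVar
      (CForm.ex x 𝕆 (neqF (s.app (v0 x)) .zero)).and
        (.all x 𝕆 ((neqF (s.app (v0 x)) .zero).imp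
          (.eq (s.app (v0 x)) (Tm.app Tm.succ t))))
  | .arr ρ τ, s, t =>
      let n := max s.maxVar t.maxVar
      .all n ρ.comp (.all (n + 1) ρ
        ((conF ρ (.var n ρ.comp) (.var (n + 1) ρ)).imp
          (conF τ (s.app (.var n ρ.comp)) (t.app (.var (n + 1) ρ)))))

/-! ### Dialectica interpretation -/

/-- Iterated function type `arrows [σ₁,…,σₖ] τ = σ₁ ⤳ ⋯ ⤳ σₖ ⤳ τ`. -/
def arrows (args : List Ty) (τ : Ty) : Ty := args.foldr Ty.arr τ

/-- Abstract each type in `l` over the argument types `args`. -/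
def absTys (args : List Ty) (l : List Ty) : List Ty := l.map (arrows args)

/-- Witness and counterexample type tuples of the Dialectica interpretation,
parametrized by the witness type `lpW τ` assigned to the linear predicate `lp_τ`. -/
def wcty (lpW : Ty → Ty) : LForm → List Ty × List Ty
  | .lp τ _ => ([lpW τ], [])
  | .nlp τ _ => ([], [lpW τ])
  | .tensor A B =>
      ((wcty lpW A).1 ++ (wcty lpW B).1,
       absTys (wcty lpW B).1 (wcty lpW A).2 ++ absTys (wcty lpW A).1 (wcty lpW B).2)
  | .par A B =>
      (absTys (wcty lpW B).2 (wcty lpW A).1 ++ absTys (wcty lpW A).2 (wcty lpW B).1,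
       (wcty lpW A).2 ++ (wcty lpW B).2)
  | .oplus A B =>
      ((wcty lpW A).1 ++ ((wcty lpW B).1 ++ [𝕆]), (wcty lpW A).2 ++ (wcty lpW B).2)
  | .withC A B =>
      ((wcty lpW A).1 ++ (wcty lpW B).1, (wcty lpW A).2 ++ ((wcty lpW B).2 ++ [𝕆]))
  | .bang A => ((wcty lpW A).1, [])
  | .quest A => ([], (wcty lpW A).2)
  | .all _ _ A => wcty lpW A
  | .ex _ _ A => wcty lpW A
  | _ => ([], [])

/-- Witness types of `A`. -/
abbrev wty (lpW : Ty → Ty) (A : LForm) : List Ty := (wcty lpW A).1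
/-- Counterexample types of `A`. -/
abbrev cty (lpW : Ty → Ty) (A : LForm) : List Ty := (wcty lpW A).2

/-- Heterogeneous tuples of terms. -/
inductive Tms : List Ty → Type
  | nil : Tms []
  | cons {τ l} : Tm τ → Tms l → Tms (τ :: l)

/-- Left part of a split tuple. -/
def Tms.splitl : {l l' : List Ty} → Tms (l ++ l') → Tms l
  | [], _, _ => .nil
  | _ :: _, _, .cons a u => .cons a (Tms.splitl u)

/-- Right part of a split tuple. -/
def Tms.splitr : {l l' : List Ty} → Tms (l ++ l') → Tms l'
  | [], _, v => v
  | _ :: _, _, .cons _ u => Tms.splitr u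

/-- Head of a nonempty tuple. -/
def Tms.hd : {τ : Ty} → {l : List Ty} → Tms (τ :: l) → Tm τ
  | _, _, .cons a _ => a

/-- Apply a term of iterated function type to a tuple of arguments. -/
def appAll : {args : List Ty} → {τ : Ty} → Tm (arrows args τ) → Tms args → Tm τ
  | [], _, t, _ => t
  | _ :: _, _, t, .cons u us => appAll (t.app u) us

/-- Apply each member of a tuple of functionals to the same argument tuple. -/
def appEach : {l : List Ty} → {args : List Ty} → Tms (absTys args l) → Tms args → Tms l
  | [], _, _, _ => .nil
  | _ :: _, _, .cons f fs, us => .cons (appAll f us) (appEach fs us)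

/-- The tuple of variables with indices `n, n+1, …` and types from `l`. -/
def varTms : (l : List Ty) → ℕ → Tms l
  | [], _ => .nil
  | τ :: l, n => .cons (.var n τ) (varTms l (n + 1))

/-- The tuple of variables with indices `g 0, g 1, …` and types from `l`. -/
def mkVarTms : (l : List Ty) → (ℕ → ℕ) → Tms l
  | [], _ => .nil
  | τ :: l, g => .cons (.var (g 0) τ) (mkVarTms l (fun k => g (k + 1)))

/-- Universal quantifier prefix over fresh variables `n, n+1, …` of types `l`. -/
def allPre : (l : List Ty) → ℕ → LForm → LForm
  | [], _, A => A
  | τ :: l, n, A => .all n τ (allPre l (n + 1) A)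

/-- Existential quantifier prefix over fresh variables `n, n+1, …` of types `l`. -/
def exPre : (l : List Ty) → ℕ → LForm → LForm
  | [], _, A => A
  | τ :: l, n, A => .ex n τ (exPre l (n + 1) A)

/-- Free variables of a tuple of terms. -/
def Tms.fvars : {l : List Ty} → Tms l → Set (ℕ × Ty)
  | _, .nil => ∅
  | _, .cons a u => a.fvars ∪ u.fvars

/-- A strict upper bound for all variable indices occurring in a tuple. -/
def Tms.maxVar : {l : List Ty} → Tms l → ℕ
  | _, .nil => 0
  | _, .cons a u => max a.maxVar u.maxVar

/-- Gödel's Dialectica interpretation `|A|^w_c` for linear logic with linear predicate,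
parametrized by the interpretation `lpI` of the linear predicate
(`|lp_τ(t)|^x :≡ lpI τ t x`). -/
def dia (lpW : Ty → Ty) (lpI : (τ : Ty) → Tm τ → Tm (lpW τ) → LForm) :
    (A : LForm) → Tms (wty lpW A) → Tms (cty lpW A) → LForm
  | .one, _, _ => .one
  | .zer, _, _ => .zer
  | .top, _, _ => .top
  | .bot, _, _ => .bot
  | .eq s t, _, _ => .eq s t
  | .neq s t, _, _ => .neq s t
  | .deq s t, _, _ => .deq s t
  | .ndeq s t, _, _ => .ndeq s t
  | .tag t, _, _ => .tag t
  | .ntag t, _, _ => .ntag t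
  | .ph, _, _ => .ph
  | .nph, _, _ => .nph
  | .lp τ t, w, _ => lpI τ t (Tms.hd w)
  | .nlp τ t, _, c => (lpI τ t (Tms.hd c)).neg
  | .tensor A B, w, c =>
      let x := Tms.splitl (l := wty lpW A) (l' := wty lpW B) w
      let u := Tms.splitr (l := wty lpW A) (l' := wty lpW B) w
      let f := Tms.splitl (l := absTys (wty lpW B) (cty lpW A))
        (l' := absTys (wty lpW A) (cty lpW B)) c
      let g := Tms.splitr (l := absTys (wty lpW B) (cty lpW A))
        (l' := absTys (wty lpW A) (cty lpW B)) c
      (dia lpW lpI A x (appEach f u)).tensor (dia lpW lpI B u (appEach g x))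
  | .par A B, w, c =>
      let f := Tms.splitl (l := absTys (cty lpW B) (wty lpW A))
        (l' := absTys (cty lpW A) (wty lpW B)) w
      let g := Tms.splitr (l := absTys (cty lpW B) (wty lpW A))
        (l' := absTys (cty lpW A) (wty lpW B)) w
      let x := Tms.splitl (l := cty lpW A) (l' := cty lpW B) c
      let u := Tms.splitr (l := cty lpW A) (l' := cty lpW B) c
      (dia lpW lpI A (appEach f u) x).par (dia lpW lpI B (appEach g x) u)
  | .oplus A B, w, c =>
      let x := Tms.splitl (l := wty lpW A) (l' := wty lpW B ++ [𝕆]) w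
      let r := Tms.splitr (l := wty lpW A) (l' := wty lpW B ++ [𝕆]) w
      let u := Tms.splitl (l := wty lpW B) (l' := [𝕆]) r
      let k0 := Tms.hd (Tms.splitr (l := wty lpW B) (l' := [𝕆]) r)
      let y := Tms.splitl (l := cty lpW A) (l' := cty lpW B) c
      let v := Tms.splitr (l := cty lpW A) (l' := cty lpW B) c
      ((LForm.bang (.deq k0 .zero)).tensor (dia lpW lpI A x y)).oplus
        ((LForm.bang (.ndeq k0 .zero)).tensor (dia lpW lpI B u v))
  | .withC A B, w, c =>
      let x := Tms.splitl (l := wty lpW A) (l' := wty lpW B) w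
      let u := Tms.splitr (l := wty lpW A) (l' := wty lpW B) w
      let y := Tms.splitl (l := cty lpW A) (l' := cty lpW B ++ [𝕆]) c
      let r := Tms.splitr (l := cty lpW A) (l' := cty lpW B ++ [𝕆]) c
      let v := Tms.splitl (l := cty lpW B) (l' := [𝕆]) r
      let k0 := Tms.hd (Tms.splitr (l := cty lpW B) (l' := [𝕆]) r)
      ((LForm.bang (.deq k0 .zero)).limp (dia lpW lpI A x y)).withC
        ((LForm.bang (.ndeq k0 .zero)).limp (dia lpW lpI B u v))
  | .bang A, w, _ =>
      let n := max A.maxVar w.maxVar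
      .bang (allPre (cty lpW A) n (dia lpW lpI A w (varTms (cty lpW A) n)))
  | .quest A, _, c =>
      let n := max A.maxVar c.maxVar
      .quest (exPre (wty lpW A) n (dia lpW lpI A (varTms (wty lpW A) n) c))
  | .all m τ A, w, c => .all m τ (dia lpW lpI A w c)
  | .ex m τ A, w, c => .ex m τ (dia lpW lpI A w c)

/-- The tagging interpretation of the linear predicate:
`|lp_τ(t)|^{x⁰} :≡ lp_τ(t) ⊗ □(sg x)`. -/
def lpWTag : Ty → Ty := fun _ => 𝕆
/-- The tagging interpretation of the linear predicate. -/
def lpITag : (τ : Ty) → Tm τ → Tm 𝕆 → LForm :=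
  fun τ t x => (LForm.lp τ t).tensor (.tag (sgT.app x))

/-- The computability interpretation of the linear predicate:
`|lp_τ(t)|^{x^{comp τ}} :≡ (con_τ(x, t))^L`. -/
def lpWCon : Ty → Ty := Ty.comp
/-- The computability interpretation of the linear predicate. -/
def lpICon : (τ : Ty) → Tm τ → Tm τ.comp → LForm :=
  fun τ t x => (conF τ x t).emb

/-! ### Standard model and simple phase semantics -/

/-- Set-theoretic denotation of the finite types (the full standard model). -/
def Ty.den : Ty → Type
  | 𝕆 => ℕ
  | .arr σ τ => σ.den → τ.den

/-- Default element of each type. -/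
def Ty.dflt : (τ : Ty) → τ.den
  | 𝕆 => (0 : ℕ)
  | .arr _ τ => fun _ => τ.dflt

/-- Variable environments for the standard model. -/
def Env : Type := (n : ℕ) → (τ : Ty) → τ.den

/-- The default environment. -/
def Env.default : Env := fun _ τ => τ.dflt

/-- Update an environment at a variable. -/
def Env.upd (e : Env) (n : ℕ) {σ : Ty} (a : σ.den) : Env :=
  fun m ρ => if h : m = n ∧ ρ = σ then (by rw [h.2]; exact a) else e m ρ

/-- Denotation of terms in the standard model. -/
def Tm.den : {τ : Ty} → Tm τ → Env → τ.den
  | _, .var n τ, e => e n τ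
  | _, .zero, _ => (0 : ℕ)
  | _, .succ, _ => Nat.succ
  | _, .K _ _, _ => fun a _ => a
  | _, .S _ _ _, _ => fun x y z => x z (y z)
  | _, .R _, _ => fun y z n => Nat.rec y (fun m ih => z m ih) n
  | _, .lam n σ t, e => fun a => Tm.den t (e.upd n (σ := σ) a)
  | _, .app f a, e => (Tm.den f e) (Tm.den a e)

/-- Variable assignments: every variable of type `τ` is mapped to a closed term of type `τ`
(closedness is a separate hypothesis). -/
def Assg : Type := (n : ℕ) → (τ : Ty) → Tm τ

/-- The environment induced by an assignment. -/
def Assg.env (β : Assg) : Env := fun n τ => (β n τ).den Env.default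

/-- Update an assignment at a variable. -/
def Assg.upd (β : Assg) (n : ℕ) {σ : Ty} (s : Tm σ) : Assg :=
  fun m ρ => if h : m = n ∧ ρ = σ then (by rw [h.2]; exact s) else β m ρ

/-- Numerical value of a term of type `0` under an assignment. -/
def Assg.val (β : Assg) (t : Tm 𝕆) : ℕ := t.den β.env

/-- The phase space `P = {0, 1}` is modelled by `Bool` with multiplication `&&`;
the set of antiphases is `{1} = {true}`.  `pol Q = Q^⊥`. -/
def pol (Q : Set Bool) : Set Bool := {p | ∀ q ∈ Q, (p && q) = true}

/-- Simple phase semantics for `ELPAω_eq` over the phase space `{0,1}`.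
`tagPos` is the fixed choice (`∅` or `{0,1}`) of the semantics of `□(t)` for
positive values of `t`. -/
def sem (tagPos : Set Bool) : LForm → Assg → Set Bool
  | .one, _ => {true}
  | .bot, _ => pol {true}
  | .top, _ => Set.univ
  | .zer, _ => pol Set.univ
  | .eq _ _, _ => {true}
  | .neq _ _, _ => pol {true}
  | .lp _ _, _ => {true}
  | .nlp _ _, _ => pol {true}
  | .ph, _ => {true}
  | .nph, _ => pol {true}
  | .deq s t, β => if β.val s = β.val t then Set.univ else ∅
  | .ndeq s t, β => pol (if β.val s = β.val t then Set.univ else ∅)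
  | .tag t, β => if β.val t = 0 then {true} else tagPos
  | .ntag t, β => pol (if β.val t = 0 then {true} else tagPos)
  | .tensor A B, β => {p | ∃ a ∈ sem tagPos A β, ∃ b ∈ sem tagPos B β, p = (a && b)}
  | .withC A B, β => sem tagPos A β ∪ sem tagPos B β
  | .quest A, β => sem tagPos A β ∪ {true}
  | .all n σ A, β => ⋂ (s : {t : Tm σ // t.Closed}), sem tagPos A (β.upd n s.1)
  | .par A B, β =>
      pol {p | ∃ a ∈ pol (sem tagPos A β), ∃ b ∈ pol (sem tagPos B β), p = (a && b)}
  | .oplus A B, β => pol (pol (sem tagPos A β) ∪ pol (sem tagPos B β))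
  | .bang A, β => pol (pol (sem tagPos A β) ∪ {true})
  | .ex n σ A, β =>
      pol (⋂ (s : {t : Tm σ // t.Closed}), pol (sem tagPos A (β.upd n s.1)))

/-- `0 =₀ 0`. -/
def eq00 : CForm := .eq .zero .zero
/-- `1 =₀ 0`. -/
def eq10 : CForm := .eq tm1 .zero

/-- The collapse of linear formulas to classical formulas:
`1, ⊤, lp, □ ↦ 0=0`; `0, ⊥ ↦ 1=0`; `⊗, & ↦ ∧`; `⅋, ⊕ ↦ ∨`; `≐ ↦ =`;
linear negation `↦ ¬`; the modalities are omitted. -/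
def LForm.collapse : LForm → CForm
  | .one => eq00
  | .top => eq00
  | .lp _ _ => eq00
  | .tag _ => eq00
  | .ph => eq00
  | .zer => eq10
  | .bot => eq10
  | .eq s t => .eq s t
  | .deq s t => .eq s t
  | .neq s t => .not (.eq s t)
  | .ndeq s t => .not (.eq s t)
  | .nlp _ _ => .not eq00
  | .ntag _ => .not eq00
  | .nph => .not eq00
  | .tensor A B => .and A.collapse B.collapse
  | .withC A B => .and A.collapse B.collapse
  | .par A B => .or A.collapse B.collapse
  | .oplus A B => .or A.collapse B.collapse
  | .bang A => A.collapse
  | .quest A => A.collapse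
  | .all n τ A => .all n τ A.collapse
  | .ex n τ A => .ex n τ A.collapse

/-- The placeholder `$` occurs only positively in `A`
(after unraveling all abbreviations and involutions, `A` does not contain `$^⊥`). -/
def LForm.PosPh : LForm → Prop
  | .nph => False
  | .tensor A B => A.PosPh ∧ B.PosPh
  | .par A B => A.PosPh ∧ B.PosPh
  | .oplus A B => A.PosPh ∧ B.PosPh
  | .withC A B => A.PosPh ∧ B.PosPh
  | .bang A => A.PosPh
  | .quest A => A.PosPh
  | .all _ _ A => A.PosPh
  | .ex _ _ A => A.PosPh
  | _ => True

/-- Substitute the formula `P` for the placeholder `$` in `A`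
(and `P^⊥` for `$^⊥`). -/
def LForm.phSubst (A P : LForm) : LForm :=
  match A with
  | .ph => P
  | .nph => P.neg
  | .tensor A B => .tensor (A.phSubst P) (B.phSubst P)
  | .par A B => .par (A.phSubst P) (B.phSubst P)
  | .oplus A B => .oplus (A.phSubst P) (B.phSubst P)
  | .withC A B => .withC (A.phSubst P) (B.phSubst P)
  | .bang A => .bang (A.phSubst P)
  | .quest A => .quest (A.phSubst P)
  | .all n τ A => .all n τ (A.phSubst P)
  | .ex n τ A => .ex n τ (A.phSubst P)
  | B => B

@[simp]
theorem LForm.neg_neg (A : LForm) : A.neg.neg = A := by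
  induction A <;> simp only [LForm.neg, *]

theorem Tm.subst_var_self {σ : Ty} (n : ℕ) {τ : Ty} (t : Tm τ) :
    t.subst n (Tm.var n σ) = t := by
  induction t with
  | var m ρ =>
      by_cases h : m = n ∧ ρ = σ
      · obtain ⟨rfl, rfl⟩ := h
        simp [Tm.subst]
      · simp [Tm.subst, h]
  | lam m ρ t ih => by_cases h : m = n ∧ ρ = σ <;> simp [Tm.subst, h, ih]
  | app f a ihf iha => simp [Tm.subst, ihf, iha]
  | _ => rfl

theorem LForm.substTm_var_self {σ : Ty} (n : ℕ) (A : LForm) :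
    A.substTm n (Tm.var n σ) = A := by
  induction A with
  | all m τ A ih => by_cases h : m = n ∧ τ = σ <;> simp [LForm.substTm, h, ih]
  | ex m τ A ih => by_cases h : m = n ∧ τ = σ <;> simp [LForm.substTm, h, ih]
  | _ => simp [LForm.substTm, Tm.subst_var_self, *]

theorem LForm.freeFor_var_self {σ : Ty} (n : ℕ) (A : LForm) :
    LForm.FreeFor (Tm.var n σ) n A := by
  induction A with
  | all m τ A ih | ex m τ A ih =>
      by_cases h : (m, τ) = (n, σ)
      · left; simp [h]
      · right; exact ⟨by simp [Tm.fvars, h], ih⟩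
  | _ => trivial

theorem LForm.notMem_fvars_ex (n : ℕ) (τ : Ty) (A : LForm) :
    (n, τ) ∉ (LForm.ex n τ A).fvars := by
  simp [LForm.fvars]

namespace LProof

variable {affine eqc : Bool} {Ax : Set CForm}

theorem swap {A B : LForm} (h : LProof affine eqc Ax [A, B]) : LProof affine eqc Ax [B, A] :=
  h.perm (List.Perm.swap _ _ _)

theorem id_neg (A : LForm) : LProof affine eqc Ax [A.neg, A] :=
  (id A).swap

theorem exR_self {Γ : List LForm} {A : LForm} (n : ℕ) (τ : Ty)
    (h : LProof affine eqc Ax (A :: Γ)) : LProof affine eqc Ax (LForm.ex n τ A :: Γ) :=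
  exR (Tm.var n τ) (LForm.freeFor_var_self n A) (by rwa [LForm.substTm_var_self])

theorem tensor_mono {A A' B B' : LForm} (hA : LProof affine eqc Ax [A.neg, A'])
    (hB : LProof affine eqc Ax [B.neg, B']) :
    LProof affine eqc Ax [(A.tensor B).neg, A'.tensor B'] :=
  par ((tensor hA.swap hB.swap).perm (List.perm_append_comm (l₁ := [_])))

theorem par_mono {A A' B B' : LForm} (hA : LProof affine eqc Ax [A.neg, A'])
    (hB : LProof affine eqc Ax [B.neg, B']) :
    LProof affine eqc Ax [(A.par B).neg, A'.par B'] :=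
  (par ((tensor hA hB).perm (List.perm_append_comm (l₁ := [_])))).swap

theorem oplus_mono {A A' B B' : LForm} (hA : LProof affine eqc Ax [A.neg, A'])
    (hB : LProof affine eqc Ax [B.neg, B']) :
    LProof affine eqc Ax [(A.oplus B).neg, A'.oplus B'] :=
  withR (oplus1 hA.swap).swap (oplus2 hB.swap).swap

theorem withC_mono {A A' B B' : LForm} (hA : LProof affine eqc Ax [A.neg, A'])
    (hB : LProof affine eqc Ax [B.neg, B']) :
    LProof affine eqc Ax [(A.withC B).neg, A'.withC B'] :=
  (withR (oplus1 hA).swap (oplus2 hB).swap).swap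

theorem bang_mono {A A' : LForm} (h : LProof affine eqc Ax [A.neg, A']) :
    LProof affine eqc Ax [A.bang.neg, A'.bang] :=
  (bangR (fun _ hB => ⟨_, List.mem_singleton.mp hB⟩) (der h).swap).swap

theorem quest_mono {A A' : LForm} (h : LProof affine eqc Ax [A.neg, A']) :
    LProof affine eqc Ax [A.quest.neg, A'.quest] :=
  bangR (fun _ hB => ⟨_, List.mem_singleton.mp hB⟩) (der h.swap).swap

theorem all_mono {A A' : LForm} (n : ℕ) (τ : Ty) (h : LProof affine eqc Ax [A.neg, A']) :
    LProof affine eqc Ax [(LForm.all n τ A).neg, LForm.all n τ A'] := by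
  refine (allR ?_ (exR_self n τ h).swap).swap
  simpa using LForm.notMem_fvars_ex n τ A.neg

theorem ex_mono {A A' : LForm} (n : ℕ) (τ : Ty) (h : LProof affine eqc Ax [A.neg, A']) :
    LProof affine eqc Ax [(LForm.ex n τ A).neg, LForm.ex n τ A'] := by
  refine allR ?_ (exR_self n τ h.swap).swap
  simpa using LForm.notMem_fvars_ex n τ A'

theorem phSubst_mono {P Q : LForm} (h : LProof affine eqc Ax [P.neg, Q]) (A : LForm)
    (hA : A.PosPh) : LProof affine eqc Ax [(A.phSubst P).neg, A.phSubst Q] := by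
  induction A with
  | ph => exact h
  | nph => exact hA.elim
  | tensor A B ihA ihB => exact tensor_mono (ihA hA.1) (ihB hA.2)
  | par A B ihA ihB => exact par_mono (ihA hA.1) (ihB hA.2)
  | oplus A B ihA ihB => exact oplus_mono (ihA hA.1) (ihB hA.2)
  | withC A B ihA ihB => exact withC_mono (ihA hA.1) (ihB hA.2)
  | bang A ih => exact bang_mono (ih hA)
  | quest A ih => exact quest_mono (ih hA)
  | all n τ A ih => exact all_mono n τ (ih hA)
  | ex n τ A ih => exact ex_mono n τ (ih hA)
  | _ => exact id_neg _

theorem cons_of_one {Γ : List LForm} {D : LForm} (hD : LProof affine eqc Ax [D, .one])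
    (h : LProof affine eqc Ax Γ) : LProof affine eqc Ax (D :: Γ) :=
  cut hD.swap (botR h)

end LProof

theorem positive_substitution_tensor_par (A B C : LForm) (hA : A.PosPh) :
    (LProof false false EPA [B.neg, .one] →
      LProof false false EPA [(A.phSubst (B.tensor C)).neg, A.phSubst C] ∧
      LProof false false EPA [(A.phSubst C).neg, A.phSubst (LForm.par B.neg C)]) ∧
    (LProof false false EPA [B] →
      LProof false false EPA [(A.phSubst C).neg, A.phSubst (B.tensor C)] ∧
      LProof false false EPA [(A.phSubst (LForm.par B.neg C)).neg, A.phSubst C]) := by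
  refine ⟨fun hB => ⟨?_, ?_⟩, fun hB => ⟨?_, ?_⟩⟩ <;> refine LProof.phSubst_mono ?_ A hA
  · exact (LProof.cons_of_one hB (LProof.id_neg C)).par
  · exact (LProof.cons_of_one hB (LProof.id C)).par.swap
  · exact (LProof.tensor hB (LProof.id C)).swap
  · exact LProof.tensor (B.neg_neg ▸ hB) (LProof.id_neg C)

end WR
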